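/- arXiv:2001.06955 — 4 statements merged into one kernel-verified Lean document; each statement's English description precedes it below -/
import Mathlib

section
/- Let M, Mˢ : Θ → ℝ, θ₀ minimize M, θ₀ˢ minimize Mˢ, d a metric with M(θ) − M(θ₀) ≥ u₋ d²(θ,θ₀) and M(θ₀) − M(θ₀ˢ) ≥ −u₊ d²(θ₀, θ₀ˢ), and sup_θ |Mˢ(θ) − M(θ)| ≤ K₁σ with d²(θ₀,θ₀ˢ) ≤ σ. Then for all θ: Mˢ(θ) − Mˢ(θ₀ˢ) ≥ u₋ d²(θ, θ₀) − (2K₁ + u₊)σ. In particular, if d²(θ,θ₀ˢ) ≤ 2d²(θ,θ₀) + 2σ, then Mˢ(θ) − Mˢ(θ₀ˢ) ≥ (u₋/2)·d²(θ,θ₀ˢ) − (2K₁ + u₊ + u₋)σ. -/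
/-- Transfer of curvature from the unsmoothed risk `M` to the smoothed risk `Mˢ`:
`Mˢ(θ) − Mˢ(θ₀ˢ) ≥ u₋ d²(θ,θ₀) − (2K₁+u₊)σ`, and under
`d²(θ,θ₀ˢ) ≤ 2d²(θ,θ₀) + 2σ` also
`Mˢ(θ) − Mˢ(θ₀ˢ) ≥ (u₋/2) d²(θ,θ₀ˢ) − (2K₁+u₊+u₋)σ`. -/
theorem stmt11 {Θ : Type*} [MetricSpace Θ] (M Ms : Θ → ℝ) (θ₀ θ₀s : Θ)
    (ulo uhi K₁ σ : ℝ) (hulo : 0 < ulo) (huhi : 0 < uhi)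
    (hmin : ∀ θ, M θ₀ ≤ M θ)
    (hmins : ∀ θ, Ms θ₀s ≤ Ms θ)
    (hcurv : ∀ θ, ulo * dist θ θ₀ ^ 2 ≤ M θ - M θ₀)
    (hback : M θ₀ - M θ₀s ≥ -(uhi * dist θ₀ θ₀s ^ 2))
    (hclose : ∀ θ, |Ms θ - M θ| ≤ K₁ * σ)
    (hd : dist θ₀ θ₀s ^ 2 ≤ σ) :
    (∀ θ, Ms θ - Ms θ₀s ≥ ulo * dist θ θ₀ ^ 2 - (2 * K₁ + uhi) * σ) ∧
    (∀ θ, dist θ θ₀s ^ 2 ≤ 2 * dist θ θ₀ ^ 2 + 2 * σ →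
      Ms θ - Ms θ₀s ≥ (ulo / 2) * dist θ θ₀s ^ 2 - (2 * K₁ + uhi + ulo) * σ) := by
  have main : ∀ θ, Ms θ - Ms θ₀s ≥ ulo * dist θ θ₀ ^ 2 - (2 * K₁ + uhi) * σ := by
    intro θ
    have h1 := abs_le.mp (hclose θ)
    have h2 := abs_le.mp (hclose θ₀s)
    have h3 := hcurv θ
    have h4 : uhi * dist θ₀ θ₀s ^ 2 ≤ uhi * σ := by
      exact mul_le_mul_of_nonneg_left hd huhi.le
    nlinarith [hback]
  refine ⟨main, fun θ hθ => ?_⟩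
  have := main θ
  nlinarith [hulo.le]
end

section
/- Let g : ℝ → ℝ be continuous with |g| ≤ G, let f : ℝ → ℝ be a bounded probability density continuous at 0 with f ≤ F₊, let K be a CDF with density K' satisfying ∫|t|K'(t)dt < ∞. Then for σ → 0⁺, (1/σ)·∫_{-∞}^{∞} g(z)·|K(z/σ) − 𝟙{z > 0}|·f(z) dz → g(0)f(0)·∫_{-∞}^{∞}|K(t) − 𝟙{t>0}| dt. -/
open MeasureTheory Filter Set

lemma tail_int (K K' : ℝ → ℝ)
    (hderiv : ∀ t, HasDerivAt K (K' t) t) (hK'pos : ∀ t, 0 ≤ K' t)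
    (hmom : Integrable (fun t => |t| * K' t))
    (htop : Tendsto K atTop (nhds 1)) :
    IntegrableOn (fun t => 1 - K t) (Set.Ioi 0) := by
  have hKc : Continuous K := by
    rw [continuous_iff_continuousAt]; exact fun t => (hderiv t).continuousAt
  have hK'm : Measurable K' := by
    have : K' = deriv K := funext fun t => ((hderiv t).deriv).symm
    rw [this]; exact measurable_deriv K
  have hKmono : Monotone K :=
    monotone_of_deriv_nonneg (fun x => (hderiv x).differentiableAt)
      (fun x => by rw [(hderiv x).deriv]; exact hK'pos x)
  have hK1 : ∀ t, K t ≤ 1 := fun t =>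
    ge_of_tendsto htop (eventually_atTop.2 ⟨t, fun s hs => hKmono hs⟩)
  set ν : Measure ℝ := volume.withDensity (fun s => ENNReal.ofReal (K' s)) with hν_def
  have hint : ∀ t : ℝ, IntegrableOn K' (Set.Ioi t) := fun t =>
    integrableOn_Ioi_deriv_of_nonneg' (fun x _ => hderiv x) (fun x _ => hK'pos x) htop
  have hval : ∀ t : ℝ, ∫ s in Set.Ioi t, K' s = 1 - K t := fun t =>
    integral_Ioi_of_hasDerivAt_of_nonneg' (fun x _ => hderiv x) (fun x _ => hK'pos x) htop
  have hν : ∀ t : ℝ, ν (Set.Ioi t) = ENNReal.ofReal (1 - K t) := by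
    intro t
    rw [hν_def, withDensity_apply _ measurableSet_Ioi,
      ← ofReal_integral_eq_lintegral_ofReal (hint t)
        (Filter.Eventually.of_forall fun x => hK'pos x), hval t]
  have hfin : ∫⁻ t in Set.Ioi 0, ENNReal.ofReal (1 - K t) < ⊤ := by
    have h1 : ∫⁻ t in Set.Ioi 0, ENNReal.ofReal (1 - K t)
        = ∫⁻ t in Set.Ioi 0, ν (Set.Ioi t) := by
      apply lintegral_congr fun t => (hν t).symm
    have h2 : ∫⁻ x, ENNReal.ofReal x ∂(ν.restrict (Set.Ioi 0))
        = ∫⁻ t in Set.Ioi 0, (ν.restrict (Set.Ioi 0)) {a : ℝ | t < a} :=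
      lintegral_eq_lintegral_meas_lt _ (ae_restrict_of_forall_mem measurableSet_Ioi
        (fun x hx => le_of_lt hx)) aemeasurable_id
    have h3 : ∫⁻ t in Set.Ioi 0, (ν.restrict (Set.Ioi 0)) {a : ℝ | t < a}
        = ∫⁻ t in Set.Ioi 0, ν (Set.Ioi t) := by
      apply setLIntegral_congr_fun measurableSet_Ioi
      intro t ht
      beta_reduce
      have : {a : ℝ | t < a} = Set.Ioi t := rfl
      rw [this, Measure.restrict_apply measurableSet_Ioi,
        Set.Ioi_inter_Ioi, max_eq_left (le_of_lt ht)]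
    have h4 : ∫⁻ x, ENNReal.ofReal x ∂(ν.restrict (Set.Ioi 0))
        = ∫⁻ x in Set.Ioi 0, ENNReal.ofReal x * ENNReal.ofReal (K' x) := by
      rw [hν_def, restrict_withDensity measurableSet_Ioi,
        lintegral_withDensity_eq_lintegral_mul _ (hK'm.ennreal_ofReal)
          (ENNReal.measurable_ofReal)]
      exact lintegral_congr fun x => by simp [mul_comm]
    have h5 : ∫⁻ x in Set.Ioi 0, ENNReal.ofReal x * ENNReal.ofReal (K' x)
        ≤ ∫⁻ x, ENNReal.ofReal (|x| * K' x) := by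
      refine le_trans (setLIntegral_le_lintegral _ _) (lintegral_mono fun x => ?_)
      rw [ENNReal.ofReal_mul (abs_nonneg x)]
      exact mul_le_mul_left (ENNReal.ofReal_le_ofReal (le_abs_self x)) _
    have hfin' : ∫⁻ x, ENNReal.ofReal (|x| * K' x) < ⊤ := by
      have h := hmom.hasFiniteIntegral
      rwa [hasFiniteIntegral_iff_ofReal (Filter.Eventually.of_forall
        fun x => mul_nonneg (abs_nonneg x) (hK'pos x))] at h
    rw [h1, ← h3, ← h2, h4]
    exact lt_of_le_of_lt h5 hfin'
  constructor
  · exact ((continuous_const.sub hKc).aestronglyMeasurable).restrict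
  · rw [hasFiniteIntegral_iff_ofReal (ae_restrict_of_forall_mem measurableSet_Ioi
      (fun x _ => sub_nonneg.2 (hK1 x)))]
    exact hfin

lemma D_int (K K' : ℝ → ℝ)
    (hderiv : ∀ t, HasDerivAt K (K' t) t) (hK'pos : ∀ t, 0 ≤ K' t)
    (hmom : Integrable (fun t => |t| * K' t))
    (hbot : Tendsto K atBot (nhds 0)) (htop : Tendsto K atTop (nhds 1)) :
    Integrable (fun t => |K t - (if 0 < t then (1:ℝ) else 0)|) := by
  have hKc : Continuous K := by
    rw [continuous_iff_continuousAt]; exact fun t => (hderiv t).continuousAt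
  have hKmono : Monotone K :=
    monotone_of_deriv_nonneg (fun x => (hderiv x).differentiableAt)
      (fun x => by rw [(hderiv x).deriv]; exact hK'pos x)
  have hK1 : ∀ t, K t ≤ 1 := fun t =>
    ge_of_tendsto htop (eventually_atTop.2 ⟨t, fun s hs => hKmono hs⟩)
  have hK0 : ∀ t, 0 ≤ K t := fun t =>
    le_of_tendsto hbot (eventually_atBot.2 ⟨t, fun s hs => hKmono hs⟩)
  -- positive side
  have hpos : IntegrableOn (fun t => |K t - (if 0 < t then (1:ℝ) else 0)|) (Set.Ioi 0) := by
    apply (tail_int K K' hderiv hK'pos hmom htop).congr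
    filter_upwards [ae_restrict_mem measurableSet_Ioi] with t ht
    rw [if_pos (mem_Ioi.mp ht), abs_of_nonpos (by linarith [hK1 t])]
    ring
  -- negative side via reflection
  have hneg : IntegrableOn (fun t => |K t - (if 0 < t then (1:ℝ) else 0)|) (Set.Iio 0) := by
    set Kr : ℝ → ℝ := fun t => 1 - K (-t) with hKr
    have hKrderiv : ∀ t, HasDerivAt Kr (K' (-t)) t := by
      intro t
      have h1 : HasDerivAt (fun x : ℝ => K (-x)) (K' (-t) * (-1)) t :=
        (hderiv (-t)).comp t (hasDerivAt_neg t)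
      have := h1.const_sub 1
      simpa using this
    have hKrmom : Integrable (fun t => |t| * K' (-t)) := by
      have := hmom.comp_neg
      simpa using this
    have hKrtop : Tendsto Kr atTop (nhds 1) := by
      have h0 : Tendsto (fun t => K (-t)) atTop (nhds 0) :=
        hbot.comp tendsto_neg_atTop_atBot
      simpa using (tendsto_const_nhds (x := (1:ℝ)) (f := atTop)).sub h0
    have htail := tail_int Kr _ hKrderiv (fun t => hK'pos (-t)) hKrmom hKrtop
    have htail' : IntegrableOn (fun t => K (-t)) (Set.Ioi 0) := by
      apply htail.congr
      apply Filter.Eventually.of_forall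
      intro t; simp [hKr]
    have hi1 : Integrable ((Set.Ioi (0:ℝ)).indicator (fun t => K (-t))) :=
      (integrable_indicator_iff measurableSet_Ioi).2 htail'
    have hi2 := hi1.comp_neg
    have hi3 : ((Set.Ioi (0:ℝ)).indicator (fun t => K (-t))) ∘ (fun x : ℝ => -x)
        = (Set.Iio (0:ℝ)).indicator K := by
      funext x
      by_cases hx : x < 0
      · rw [Function.comp_apply, Set.indicator_of_mem (by simpa using hx),
          Set.indicator_of_mem (by simpa using hx), neg_neg]
      · rw [Function.comp_apply, Set.indicator_of_notMem (by simpa using hx),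
          Set.indicator_of_notMem (by simpa using hx)]
    rw [show (fun t : ℝ => ((Set.Ioi (0:ℝ)).indicator (fun t => K (-t))) (-t))
        = ((Set.Ioi (0:ℝ)).indicator (fun t => K (-t))) ∘ (fun x : ℝ => -x) from rfl, hi3] at hi2
    have hKIio : IntegrableOn K (Set.Iio 0) :=
      (integrable_indicator_iff measurableSet_Iio).1 hi2
    apply hKIio.congr
    filter_upwards [ae_restrict_mem measurableSet_Iio] with t ht
    rw [if_neg (by simp at ht; linarith), sub_zero, abs_of_nonneg (hK0 t)]
  have hu : IntegrableOn (fun t => |K t - (if 0 < t then (1:ℝ) else 0)|)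
      (Set.Iio 0 ∪ Set.Ioi 0) := hneg.union hpos
  rw [Set.Iio_union_Ioi] at hu
  rw [← integrableOn_univ]
  have h0 : ({(0:ℝ)}ᶜ : Set ℝ) =ᵐ[volume] Set.univ := by
    rw [ae_eq_univ]; simp
  exact hu.congr_set_ae h0.symm

/-- Smoothing-bias limit: as `σ → 0⁺`,
`(1/σ)∫ g(z)|K(z/σ) − 𝟙{z>0}| f(z) dz → g(0)f(0)·∫|K(t) − 𝟙{t>0}| dt`. -/
theorem stmt13 (g f K K' : ℝ → ℝ) (G Fp : ℝ)
    (hg : Continuous g) (hgbdd : ∀ z, |g z| ≤ G)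
    (hf0 : ∀ z, 0 ≤ f z) (hfdens : ∫ z : ℝ, f z = 1) (hfbdd : ∀ z, f z ≤ Fp)
    (hfcont : ContinuousAt f 0) (hfmeas : Measurable f)
    (hderiv : ∀ t, HasDerivAt K (K' t) t)
    (hK'pos : ∀ t, 0 ≤ K' t)
    (hmom : Integrable (fun t => |t| * K' t))
    (hbot : Tendsto K atBot (nhds 0)) (htop : Tendsto K atTop (nhds 1)) :
    Tendsto (fun σ : ℝ =>
        (1 / σ) * ∫ z : ℝ, g z * |K (z / σ) - (if 0 < z then (1:ℝ) else 0)| * f z)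
      (nhdsWithin 0 (Set.Ioi 0))
      (nhds (g 0 * f 0 * ∫ t : ℝ, |K t - (if 0 < t then (1:ℝ) else 0)|)) := by
  set D : ℝ → ℝ := fun t => |K t - (if 0 < t then (1:ℝ) else 0)| with hD
  have hDint : Integrable D := D_int K K' hderiv hK'pos hmom hbot htop
  have hKc : Continuous K := by
    rw [continuous_iff_continuousAt]; exact fun t => (hderiv t).continuousAt
  have hDmeas : Measurable D := by
    apply Measurable.abs
    exact hKc.measurable.sub (Measurable.ite measurableSet_Ioi measurable_const measurable_const)
  have hG : 0 ≤ G := le_trans (abs_nonneg _) (hgbdd 0)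
  have hDnn : ∀ t, 0 ≤ D t := fun t => abs_nonneg _
  have key : Tendsto (fun σ : ℝ => ∫ t : ℝ, g (σ * t) * D t * f (σ * t))
      (nhdsWithin 0 (Set.Ioi 0)) (nhds (∫ t : ℝ, g 0 * D t * f 0)) := by
    apply tendsto_integral_filter_of_dominated_convergence (bound := fun t => G * Fp * D t)
    · apply Filter.Eventually.of_forall; intro σ
      exact (((hg.measurable.comp (measurable_id.const_mul σ)).mul hDmeas).mul
        (hfmeas.comp (measurable_id.const_mul σ))).aestronglyMeasurable
    · apply Filter.Eventually.of_forall; intro σ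
      apply Filter.Eventually.of_forall; intro t
      rw [Real.norm_eq_abs, abs_mul, abs_mul, abs_abs, abs_of_nonneg (hf0 _)]
      have h1 : |g (σ * t)| * D t ≤ G * D t :=
        mul_le_mul_of_nonneg_right (hgbdd _) (hDnn t)
      have h2 : |g (σ * t)| * D t * f (σ * t) ≤ (G * D t) * Fp :=
        mul_le_mul h1 (hfbdd _) (hf0 _) (mul_nonneg hG (hDnn t))
      exact le_of_le_of_eq h2 (by ring)
    · exact hDint.const_mul (G * Fp)
    · apply Filter.Eventually.of_forall; intro t
      have hσt : Tendsto (fun σ : ℝ => σ * t) (nhdsWithin 0 (Set.Ioi 0)) (nhds 0) := by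
        have h : Tendsto (fun x : ℝ => x * t) (nhds 0) (nhds (0 * t)) :=
          (continuous_id.mul continuous_const).tendsto 0
        rw [zero_mul] at h
        exact h.mono_left nhdsWithin_le_nhds
      exact (((hg.tendsto 0).comp hσt).mul tendsto_const_nhds).mul (hfcont.tendsto.comp hσt)
  have hlim : (∫ t : ℝ, g 0 * D t * f 0) = g 0 * f 0 * ∫ t : ℝ, D t := by
    calc ∫ t : ℝ, g 0 * D t * f 0 = ∫ t : ℝ, (g 0 * f 0) * D t := by
          congr 1; funext t; ring
    _ = (g 0 * f 0) * ∫ t : ℝ, D t := integral_const_mul _ _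
  rw [hlim] at key
  apply key.congr'
  filter_upwards [self_mem_nhdsWithin] with σ hσ
  have hs : (0:ℝ) < σ := hσ
  have hmain := MeasureTheory.Measure.integral_comp_mul_left
    (fun z => g z * |K (z / σ) - (if 0 < z then (1:ℝ) else 0)| * f z) σ
  have heq : (fun x : ℝ => g (σ * x) * |K ((σ * x) / σ) -
      (if 0 < σ * x then (1:ℝ) else 0)| * f (σ * x))
      = fun t : ℝ => g (σ * t) * D t * f (σ * t) := by
    funext t
    rw [mul_div_cancel_left₀ t (ne_of_gt hs)]
    congr 2
    rw [hD]
    congr 1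
    rw [if_congr (mul_pos_iff_of_pos_left hs) rfl rfl]
  rw [heq] at hmain
  rw [hmain, abs_of_pos (inv_pos.2 hs), smul_eq_mul, one_div]
end

section
/- Let α₀ < γ < β₀ be reals, and let ψ₀, ψ be change-plane parameters with P(sign(Qᵀψ) ≠ sign(Qᵀψ₀)) > 0 whenever ψ ≠ ψ₀. Define M(ψ) = (β₀ − γ)·P(Qᵀψ₀ > 0, Qᵀψ ≤ 0) + (α₀ − γ)·P(Qᵀψ₀ ≤ 0, Qᵀψ ≤ 0). Then M(ψ) − M(ψ₀) = (β₀ − γ)·P(Qᵀψ₀ > 0, Qᵀψ ≤ 0) + (γ − α₀)·P(Qᵀψ₀ ≤ 0, Qᵀψ > 0) ≥ min(β₀ − γ, γ − α₀)·P(sign(Qᵀψ) ≠ sign(Qᵀψ₀)), and ψ₀ is the unique minimizer of M. -/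
open MeasureTheory
open scoped RealInnerProductSpace

/-- Excess-risk identity and lower bound for the population classification loss
`M(ψ) = (β₀−γ)P(Qᵀψ₀>0, Qᵀψ≤0) + (α₀−γ)P(Qᵀψ₀≤0, Qᵀψ≤0)` with `α₀ < γ < β₀`,
together with uniqueness of the minimizer `ψ₀`. -/
theorem stmt14 {Ω : Type*} [MeasurableSpace Ω] (μ : Measure Ω) [IsProbabilityMeasure μ]
    {d : ℕ} (Q : Ω → EuclideanSpace ℝ (Fin d)) (hQ : Measurable Q)
    (α₀ β₀ γ : ℝ) (hαγ : α₀ < γ) (hγβ : γ < β₀)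
    (ψ₀ : EuclideanSpace ℝ (Fin d))
    (M : EuclideanSpace ℝ (Fin d) → ℝ)
    (hM : ∀ ψ, M ψ =
      (β₀ - γ) * (μ {ω | 0 < ⟪ψ₀, Q ω⟫ ∧ ⟪ψ, Q ω⟫ ≤ 0}).toReal
      + (α₀ - γ) * (μ {ω | ⟪ψ₀, Q ω⟫ ≤ 0 ∧ ⟪ψ, Q ω⟫ ≤ 0}).toReal)
    (hwedge : ∀ ψ, ψ ≠ ψ₀ →
      0 < μ {ω | (0 < ⟪ψ₀, Q ω⟫ ∧ ⟪ψ, Q ω⟫ ≤ 0) ∨ (⟪ψ₀, Q ω⟫ ≤ 0 ∧ 0 < ⟪ψ, Q ω⟫)}) :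
    ∀ ψ : EuclideanSpace ℝ (Fin d),
      (M ψ - M ψ₀ =
        (β₀ - γ) * (μ {ω | 0 < ⟪ψ₀, Q ω⟫ ∧ ⟪ψ, Q ω⟫ ≤ 0}).toReal
        + (γ - α₀) * (μ {ω | ⟪ψ₀, Q ω⟫ ≤ 0 ∧ 0 < ⟪ψ, Q ω⟫}).toReal) ∧
      (min (β₀ - γ) (γ - α₀) *
          (μ {ω | (0 < ⟪ψ₀, Q ω⟫ ∧ ⟪ψ, Q ω⟫ ≤ 0) ∨
              (⟪ψ₀, Q ω⟫ ≤ 0 ∧ 0 < ⟪ψ, Q ω⟫)}).toReal ≤ M ψ - M ψ₀) ∧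
      (ψ ≠ ψ₀ → M ψ₀ < M ψ) := by
  intro ψ
  have hf : Measurable fun ω => ⟪ψ₀, Q ω⟫ := measurable_const.inner hQ
  have hg : Measurable fun ω => ⟪ψ, Q ω⟫ := measurable_const.inner hQ
  set S1 : Set Ω := {ω | 0 < ⟪ψ₀, Q ω⟫ ∧ ⟪ψ, Q ω⟫ ≤ 0} with hS1
  set S2 : Set Ω := {ω | ⟪ψ₀, Q ω⟫ ≤ 0 ∧ ⟪ψ, Q ω⟫ ≤ 0} with hS2
  set S3 : Set Ω := {ω | ⟪ψ₀, Q ω⟫ ≤ 0 ∧ 0 < ⟪ψ, Q ω⟫} with hS3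
  set A : Set Ω := {ω | ⟪ψ₀, Q ω⟫ ≤ 0} with hA
  have mS1 : MeasurableSet S1 :=
    (measurableSet_lt measurable_const hf).inter (measurableSet_le hg measurable_const)
  have mS2 : MeasurableSet S2 :=
    (measurableSet_le hf measurable_const).inter (measurableSet_le hg measurable_const)
  have mS3 : MeasurableSet S3 :=
    (measurableSet_le hf measurable_const).inter (measurableSet_lt measurable_const hg)
  -- M ψ₀ computation
  have hM0 : M ψ₀ = (α₀ - γ) * (μ A).toReal := by
    rw [hM ψ₀]
    have h1 : {ω | 0 < ⟪ψ₀, Q ω⟫ ∧ ⟪ψ₀, Q ω⟫ ≤ 0} = (∅ : Set Ω) := by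
      ext ω; simp only [Set.mem_setOf_eq, Set.mem_empty_iff_false, iff_false]
      rintro ⟨h1, h2⟩; linarith
    have h2 : {ω | ⟪ψ₀, Q ω⟫ ≤ 0 ∧ ⟪ψ₀, Q ω⟫ ≤ 0} = A := by
      ext ω; simp [hA]
    rw [h1, h2]; simp
  -- split A
  have hsplit : μ A = μ S2 + μ S3 := by
    have hU : A = S2 ∪ S3 := by
      ext ω
      simp only [hA, hS2, hS3, Set.mem_setOf_eq, Set.mem_union]
      constructor
      · intro h
        rcases le_or_gt ⟪ψ, Q ω⟫ 0 with h' | h'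
        · exact Or.inl ⟨h, h'⟩
        · exact Or.inr ⟨h, h'⟩
      · rintro (⟨h, _⟩ | ⟨h, _⟩) <;> exact h
    have hdisj : Disjoint S2 S3 := by
      rw [Set.disjoint_left]
      rintro ω ⟨_, h1⟩ ⟨_, h2⟩; linarith
    rw [hU, measure_union hdisj mS3]
  have hAeq : (μ A).toReal = (μ S2).toReal + (μ S3).toReal := by
    rw [hsplit, ENNReal.toReal_add (measure_ne_top μ _) (measure_ne_top μ _)]
  -- excess risk identity
  have hdiff : M ψ - M ψ₀ =
      (β₀ - γ) * (μ S1).toReal + (γ - α₀) * (μ S3).toReal := by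
    rw [hM ψ, hM0, hAeq]; ring
  refine ⟨hdiff, ?_, ?_⟩
  · -- lower bound
    have hWeq : (μ (S1 ∪ S3)).toReal = (μ S1).toReal + (μ S3).toReal := by
      have hdisj : Disjoint S1 S3 := by
        rw [Set.disjoint_left]
        rintro ω ⟨h1, _⟩ ⟨h2, _⟩; linarith
      rw [measure_union hdisj mS3,
        ENNReal.toReal_add (measure_ne_top μ _) (measure_ne_top μ _)]
    have hWset : {ω | (0 < ⟪ψ₀, Q ω⟫ ∧ ⟪ψ, Q ω⟫ ≤ 0) ∨
        (⟪ψ₀, Q ω⟫ ≤ 0 ∧ 0 < ⟪ψ, Q ω⟫)} = S1 ∪ S3 := rfl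
    rw [hdiff, hWset, hWeq, mul_add]
    have h1 : (0:ℝ) ≤ (μ S1).toReal := ENNReal.toReal_nonneg
    have h3 : (0:ℝ) ≤ (μ S3).toReal := ENNReal.toReal_nonneg
    gcongr
    · exact min_le_left _ _
    · exact min_le_right _ _
  · intro hne
    have hW := hwedge ψ hne
    have hWset : {ω | (0 < ⟪ψ₀, Q ω⟫ ∧ ⟪ψ, Q ω⟫ ≤ 0) ∨
        (⟪ψ₀, Q ω⟫ ≤ 0 ∧ 0 < ⟪ψ, Q ω⟫)} = S1 ∪ S3 := rfl
    have hWpos : 0 < (μ (S1 ∪ S3)).toReal := by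
      rw [hWset] at hW
      exact ENNReal.toReal_pos hW.ne' (measure_ne_top μ _)
    have hdisj : Disjoint S1 S3 := by
      rw [Set.disjoint_left]
      rintro ω ⟨h1, _⟩ ⟨h2, _⟩; linarith
    have hWeq : (μ (S1 ∪ S3)).toReal = (μ S1).toReal + (μ S3).toReal := by
      rw [measure_union hdisj mS3,
        ENNReal.toReal_add (measure_ne_top μ _) (measure_ne_top μ _)]
    have hsum : 0 < (μ S1).toReal + (μ S3).toReal := hWeq ▸ hWpos
    have h1 : (0:ℝ) ≤ (μ S1).toReal := ENNReal.toReal_nonneg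
    have h3 : (0:ℝ) ≤ (μ S3).toReal := ENNReal.toReal_nonneg
    have : 0 < (β₀ - γ) * (μ S1).toReal + (γ - α₀) * (μ S3).toReal := by
      rcases lt_or_ge 0 (μ S1).toReal with hp | hp
      · have : 0 < (β₀ - γ) * (μ S1).toReal := mul_pos (by linarith) hp
        nlinarith
      · have hp1 : (μ S1).toReal = 0 := le_antisymm hp h1
        have hp3 : 0 < (μ S3).toReal := by rw [hp1] at hsum; linarith
        have : 0 < (γ - α₀) * (μ S3).toReal := mul_pos (by linarith) hp3
        nlinarith
    linarith [hdiff]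
end

section
/- Under the binary change-plane model with γ = (α₀+β₀)/2, for any ψ: M(ψ) − M(ψ₀) = ((β₀ − α₀)/2)·P(sign(Qᵀψ) ≠ sign(Qᵀψ₀)), where M(ψ) = E[(Y − γ)𝟙{Qᵀψ ≤ 0}]. -/
open MeasureTheory
open scoped RealInnerProductSpace

/-- Under the binary change-plane model
`P(Y=1|Q) = α₀𝟙{Qᵀψ₀ ≤ 0} + β₀𝟙{Qᵀψ₀ > 0}` with `γ = (α₀+β₀)/2`, the excess risk of
`M(ψ) = E[(Y − γ)𝟙{Qᵀψ ≤ 0}]` equals `((β₀−α₀)/2)·P(sign(Qᵀψ) ≠ sign(Qᵀψ₀))`. -/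
theorem stmt15 {Ω : Type*} [MeasurableSpace Ω] (μ : Measure Ω) [IsProbabilityMeasure μ]
    {d : ℕ} (Q : Ω → EuclideanSpace ℝ (Fin d)) (hQ : Measurable Q)
    (Y : Ω → ℝ) (hY : Measurable Y) (hY01 : ∀ ω, Y ω = 0 ∨ Y ω = 1)
    (α₀ β₀ : ℝ) (hα : 0 < α₀) (hαβ : α₀ < β₀) (hβ : β₀ < 1)
    (ψ₀ : EuclideanSpace ℝ (Fin d))
    (hmodel : ∀ A : Set (EuclideanSpace ℝ (Fin d)), MeasurableSet A →
      ∫ ω in Q ⁻¹' A, Y ω ∂μ =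
        ∫ ω in Q ⁻¹' A,
          (α₀ * (if ⟪ψ₀, Q ω⟫ ≤ 0 then (1:ℝ) else 0)
            + β₀ * (if 0 < ⟪ψ₀, Q ω⟫ then (1:ℝ) else 0)) ∂μ) :
    ∀ ψ : EuclideanSpace ℝ (Fin d),
      (∫ ω, (Y ω - (α₀ + β₀) / 2) * (if ⟪ψ, Q ω⟫ ≤ 0 then (1:ℝ) else 0) ∂μ)
        - (∫ ω, (Y ω - (α₀ + β₀) / 2) * (if ⟪ψ₀, Q ω⟫ ≤ 0 then (1:ℝ) else 0) ∂μ)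
      = ((β₀ - α₀) / 2) *
          (μ {ω | (0 < ⟪ψ₀, Q ω⟫ ∧ ⟪ψ, Q ω⟫ ≤ 0) ∨
              (⟪ψ₀, Q ω⟫ ≤ 0 ∧ 0 < ⟪ψ, Q ω⟫)}).toReal := by
  intro ψ
  have hinner : ∀ φ : EuclideanSpace ℝ (Fin d), Measurable fun ω => ⟪φ, Q ω⟫ :=
    fun φ => measurable_const.inner hQ
  have hset : ∀ φ : EuclideanSpace ℝ (Fin d), MeasurableSet {ω | ⟪φ, Q ω⟫ ≤ 0} :=
    fun φ => measurableSet_le (hinner φ) measurable_const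
  set γ : ℝ := (α₀ + β₀) / 2 with hγ
  set m : Ω → ℝ := fun ω => α₀ * (if ⟪ψ₀, Q ω⟫ ≤ 0 then (1:ℝ) else 0)
      + β₀ * (if 0 < ⟪ψ₀, Q ω⟫ then (1:ℝ) else 0) with hm
  have hγpos : 0 < γ := by rw [hγ]; linarith
  have hYint : Integrable Y μ := by
    refine (integrable_const (1:ℝ)).mono' hY.aestronglyMeasurable ?_
    filter_upwards with ω
    rcases hY01 ω with h | h <;> simp [h]
  have hmmeas : Measurable m := by
    apply Measurable.add
    · exact measurable_const.mul (Measurable.ite (hset ψ₀) measurable_const measurable_const)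
    · exact measurable_const.mul
        (Measurable.ite (measurableSet_lt measurable_const (hinner ψ₀)) measurable_const measurable_const)
  have hmb : ∀ ω, |m ω| ≤ α₀ + β₀ := by
    intro ω
    simp only [hm]
    split_ifs <;> rw [abs_le] <;> constructor <;> nlinarith
  have hmint : Integrable m μ := by
    refine (integrable_const (α₀ + β₀)).mono' hmmeas.aestronglyMeasurable ?_
    filter_upwards with ω
    simpa using hmb ω
  have key : ∀ φ : EuclideanSpace ℝ (Fin d),
      (∫ ω, (Y ω - γ) * (if ⟪φ, Q ω⟫ ≤ 0 then (1:ℝ) else 0) ∂μ)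
        = ∫ ω, (m ω - γ) * (if ⟪φ, Q ω⟫ ≤ 0 then (1:ℝ) else 0) ∂μ := by
    intro φ
    have hA : MeasurableSet {x : EuclideanSpace ℝ (Fin d) | ⟪φ, x⟫ ≤ 0} :=
      measurableSet_le (Continuous.measurable (continuous_const.inner continuous_id)) measurable_const
    have hpre : Q ⁻¹' {x : EuclideanSpace ℝ (Fin d) | ⟪φ, x⟫ ≤ 0} = {ω | ⟪φ, Q ω⟫ ≤ 0} := rfl
    have hEq := hmodel _ hA
    rw [hpre] at hEq
    have hind : ∀ f : Ω → ℝ, (fun ω => f ω * (if ⟪φ, Q ω⟫ ≤ 0 then (1:ℝ) else 0))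
        = Set.indicator {ω | ⟪φ, Q ω⟫ ≤ 0} f := by
      intro f
      funext ω
      by_cases h : ⟪φ, Q ω⟫ ≤ 0 <;> simp [Set.indicator_apply, h]
    rw [hind, hind, integral_indicator (hset φ), integral_indicator (hset φ)]
    rw [integral_sub hYint.integrableOn (integrable_const γ).integrableOn,
      integral_sub hmint.integrableOn (integrable_const γ).integrableOn, hEq]
  rw [key ψ, key ψ₀]
  have hχ : ∀ φ : EuclideanSpace ℝ (Fin d),
      Integrable (fun ω => (m ω - γ) * (if ⟪φ, Q ω⟫ ≤ 0 then (1:ℝ) else 0)) μ := by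
    intro φ
    refine (integrable_const (α₀ + β₀ + γ)).mono'
      (((hmmeas.sub measurable_const).mul
        (Measurable.ite (hset φ) measurable_const measurable_const)).aestronglyMeasurable) ?_
    filter_upwards with ω
    have hb := abs_le.mp (hmb ω)
    have h1 : |(if ⟪φ, Q ω⟫ ≤ 0 then (1:ℝ) else 0)| ≤ 1 := by split_ifs <;> simp
    have h2 : |m ω - γ| ≤ α₀ + β₀ + γ := by
      rw [abs_le]; constructor <;> nlinarith [hb.1, hb.2]
    rw [Real.norm_eq_abs, abs_mul]
    calc |m ω - γ| * |(if ⟪φ, Q ω⟫ ≤ 0 then (1:ℝ) else 0)|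
        ≤ (α₀ + β₀ + γ) * 1 := by
          exact mul_le_mul h2 h1 (abs_nonneg _) (by linarith)
      _ = α₀ + β₀ + γ := mul_one _
  rw [← integral_sub (hχ ψ) (hχ ψ₀)]
  have hW : MeasurableSet {ω | (0 < ⟪ψ₀, Q ω⟫ ∧ ⟪ψ, Q ω⟫ ≤ 0) ∨
      (⟪ψ₀, Q ω⟫ ≤ 0 ∧ 0 < ⟪ψ, Q ω⟫)} :=
    MeasurableSet.union
      ((measurableSet_lt measurable_const (hinner ψ₀)).inter (hset ψ))
      ((hset ψ₀).inter (measurableSet_lt measurable_const (hinner ψ)))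
  have hpt : (fun ω => (m ω - γ) * (if ⟪ψ, Q ω⟫ ≤ 0 then (1:ℝ) else 0)
        - (m ω - γ) * (if ⟪ψ₀, Q ω⟫ ≤ 0 then (1:ℝ) else 0))
      = Set.indicator {ω | (0 < ⟪ψ₀, Q ω⟫ ∧ ⟪ψ, Q ω⟫ ≤ 0) ∨
          (⟪ψ₀, Q ω⟫ ≤ 0 ∧ 0 < ⟪ψ, Q ω⟫)} (fun _ => (β₀ - α₀) / 2) := by
    funext ω
    rcases le_or_gt ⟪ψ₀, Q ω⟫ 0 with h0 | h0 <;> rcases le_or_gt ⟪ψ, Q ω⟫ 0 with h1 | h1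
    · have hw : ¬(0 < ⟪ψ₀, Q ω⟫ ∧ ⟪ψ, Q ω⟫ ≤ 0 ∨ ⟪ψ₀, Q ω⟫ ≤ 0 ∧ 0 < ⟪ψ, Q ω⟫) := by
        rintro (⟨h, -⟩ | ⟨-, h⟩) <;> linarith
      have hw' : ω ∉ {ω | (0 < ⟪ψ₀, Q ω⟫ ∧ ⟪ψ, Q ω⟫ ≤ 0) ∨ (⟪ψ₀, Q ω⟫ ≤ 0 ∧ 0 < ⟪ψ, Q ω⟫)} := hw
      rw [if_pos h1, if_pos h0, sub_self]
      exact (Set.indicator_of_notMem hw' (fun _ => (β₀ - α₀) / 2)).symm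
    · simp only [Set.indicator_apply, Set.mem_setOf_eq, hm, hγ, if_pos h0,
        if_neg (not_le.mpr h1), if_neg (not_lt.mpr h0)]
      rw [if_pos (Or.inr ⟨h0, h1⟩)]; ring
    · simp only [Set.indicator_apply, Set.mem_setOf_eq, hm, hγ, if_pos h1,
        if_neg (not_le.mpr h0), if_pos h0]
      rw [if_pos (Or.inl ⟨h0, h1⟩)]; ring
    · have hw : ¬(0 < ⟪ψ₀, Q ω⟫ ∧ ⟪ψ, Q ω⟫ ≤ 0 ∨ ⟪ψ₀, Q ω⟫ ≤ 0 ∧ 0 < ⟪ψ, Q ω⟫) := by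
        rintro (⟨-, h⟩ | ⟨h, -⟩) <;> linarith
      have hw' : ω ∉ {ω | (0 < ⟪ψ₀, Q ω⟫ ∧ ⟪ψ, Q ω⟫ ≤ 0) ∨ (⟪ψ₀, Q ω⟫ ≤ 0 ∧ 0 < ⟪ψ, Q ω⟫)} := hw
      rw [if_neg (not_le.mpr h1), if_neg (not_le.mpr h0), mul_zero, sub_zero]
      exact (Set.indicator_of_notMem hw' (fun _ => (β₀ - α₀) / 2)).symm
  rw [hpt, integral_indicator hW, setIntegral_const, smul_eq_mul, mul_comm]
  rfl
end
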